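/- Let F(A,θ) be the free partially commutative group, (B,Z) a partition of A. The normal subgroup H_Z generated by Z in F(A,θ) is itself a free partially commutative group, freely generated (in the partially commutative sense) by the set ρ_Z(B) = {w⁻¹ z w : zw ∈ β_Z^R(B̃)} subject exactly to the commutation relations θ̂_ρ = {(t,t') ∈ ρ_Z(B)² : t t' = t' t and t ≠ t'}. -/

import Mathlib

namespace PCM

variable {A : Type*}

/-- Elementary commutation relation on words. -/
def TraceRel (θ : A → A → Prop) : FreeMonoid A → FreeMonoid A → Prop :=
  fun x y => ∃ a b, θ a b ∧ x = FreeMonoid.of a * FreeMonoid.of b ∧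
    y = FreeMonoid.of b * FreeMonoid.of a

/-- The congruence generated by the commutations. -/
def traceCon (θ : A → A → Prop) : Con (FreeMonoid A) := conGen (TraceRel θ)

/-- The free partially commutative (trace) monoid `M(A,θ)`. -/
abbrev Trace (A : Type*) (θ : A → A → Prop) := (traceCon θ).Quotient

/-- Canonical projection from words to traces. -/
def trMk (θ : A → A → Prop) : FreeMonoid A →* Trace A θ := (traceCon θ).mk'

/-- The trace of a single letter. -/
def trOf (θ : A → A → Prop) (a : A) : Trace A θ := trMk θ (FreeMonoid.of a)

/-- `IA t` : the set of possible initial letters of a trace. -/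
def IA (θ : A → A → Prop) (t : Trace A θ) : Set A := {a | ∃ w, t = trOf θ a * w}

/-- The alphabet of a trace. -/
def Alph (θ : A → A → Prop) (t : Trace A θ) : Set A :=
  {a | ∃ l : List A, trMk θ (FreeMonoid.ofList l) = t ∧ a ∈ l}

/-- The submonoid `M(B,θ_B)` generated by a subalphabet. -/
def subTr (θ : A → A → Prop) (B : Set A) : Submonoid (Trace A θ) :=
  Submonoid.closure (trOf θ '' B)

/-- `β_Z(B)` where `Z = A - B`. -/
def beta (θ : A → A → Prop) (B : Set A) : Set (Trace A θ) :=
  {t | ∃ z, z ∉ B ∧ ∃ w ∈ subTr θ B, t = trOf θ z * w ∧ IA θ t = {z}}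

/-- The induced independence relation `θ_X` on a set of traces. -/
def thetaX (θ : A → A → Prop) (X : Set (Trace A θ)) (x y : X) : Prop :=
  ∀ a ∈ Alph θ (x : Trace A θ), ∀ b ∈ Alph θ (y : Trace A θ), θ a b

/-- `X` is a partially commutative code : the canonical morphism from
`M(X,θ_X)` is injective. -/
def IsPCCode (θ : A → A → Prop) (X : Set (Trace A θ)) : Prop :=
  ∃ f : Trace X (thetaX θ X) →* Trace A θ,
    (∀ x : X, f (trOf (thetaX θ X) x) = (x : Trace A θ)) ∧ Function.Injective f

/-- Dependence relation (edges of the dependence graph). -/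
def dep (θ : A → A → Prop) (a b : A) : Prop := a ≠ b ∧ ¬ θ a b

/-- A path `z - b₁ - ⋯ - bₙ - z'` in the dependence graph with inner vertices in `B`. -/
def DepPathB (θ : A → A → Prop) (B : Set A) (z z' : A) : Prop :=
  ∃ l : List A, (∀ b ∈ l, b ∈ B) ∧ List.Chain (dep θ) z (l ++ [z'])

/-- `B` is a transitively factorizing subalphabet. -/
def IsTFSA (θ : A → A → Prop) (B : Set A) : Prop :=
  ∀ z z', z ∉ B → z' ∉ B → θ z z' → ¬ DepPathB θ B z z'

end PCM

namespace PCM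

variable {A : Type*}

/-- Forget the bar of a signed letter of `Ã = A ∪ Ā`. -/
def unbar : A ⊕ A → A := Sum.elim id id

/-- The independence relation `θ̃` on `Ã = A ∪ Ā`. -/
def tilde (θ : A → A → Prop) : (A ⊕ A) → (A ⊕ A) → Prop :=
  fun x y => θ (unbar x) (unbar y)

/-- Commutation relators for the free partially commutative group. -/
def pcRels (θ : A → A → Prop) : Set (FreeGroup A) :=
  {w | ∃ a b, θ a b ∧
    w = FreeGroup.of a * FreeGroup.of b * (FreeGroup.of a)⁻¹ * (FreeGroup.of b)⁻¹}

/-- The free partially commutative group `F(A,θ)`. -/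
abbrev PCGroup (A : Type*) (θ : A → A → Prop) := PresentedGroup (pcRels θ)

/-- The generator of `F(A,θ)` corresponding to a letter. -/
def gOf (θ : A → A → Prop) (a : A) : PCGroup A θ := PresentedGroup.of a

/-- A trace has length `n`. -/
def HasLen (θ : A → A → Prop) (t : Trace A θ) (n : ℕ) : Prop :=
  ∃ l : List A, trMk θ (FreeMonoid.ofList l) = t ∧ l.length = n

/-- `s` is the canonical morphism `M(Ã,θ̃) → F(A,θ)`. -/
def IsSection (θ : A → A → Prop)
    (s : Trace (A ⊕ A) (tilde θ) →* PCGroup A θ) : Prop :=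
  (∀ a : A, s (trOf (tilde θ) (Sum.inl a)) = gOf θ a) ∧
  (∀ a : A, s (trOf (tilde θ) (Sum.inr a)) = (gOf θ a)⁻¹)

/-- A trace over `Ã` is reduced: it has minimal length in its fiber under `s`. -/
def ReducedWrt (θ : A → A → Prop)
    (s : Trace (A ⊕ A) (tilde θ) →* PCGroup A θ)
    (t : Trace (A ⊕ A) (tilde θ)) : Prop :=
  ∀ (t' : Trace (A ⊕ A) (tilde θ)) (n n' : ℕ),
    s t' = s t → HasLen (tilde θ) t n → HasLen (tilde θ) t' n' → n ≤ n'

/-- `ρ_Z(B) = {w⁻¹zw | zw ∈ β_Z^R(B̃)}` inside `F(A,θ)`. -/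
def rhoSet (θ : A → A → Prop) (B : Set A)
    (s : Trace (A ⊕ A) (tilde θ) →* PCGroup A θ) : Set (PCGroup A θ) :=
  {g | ∃ z, z ∉ B ∧ ∃ wl : List (A ⊕ A), (∀ x ∈ wl, unbar x ∈ B) ∧
    IA (tilde θ) (trMk (tilde θ) (FreeMonoid.ofList (Sum.inl z :: wl))) = {Sum.inl z} ∧
    ReducedWrt θ s (trMk (tilde θ) (FreeMonoid.ofList (Sum.inl z :: wl))) ∧
    g = (s (trMk (tilde θ) (FreeMonoid.ofList wl)))⁻¹ * gOf θ z *
        s (trMk (tilde θ) (FreeMonoid.ofList wl))}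

/-- The set `β_Z^R(B̃)` of reduced traces `zw`. -/
def betaR (θ : A → A → Prop) (B : Set A)
    (s : Trace (A ⊕ A) (tilde θ) →* PCGroup A θ) : Set (Trace (A ⊕ A) (tilde θ)) :=
  {t | ∃ z, z ∉ B ∧ ∃ wl : List (A ⊕ A), (∀ x ∈ wl, unbar x ∈ B) ∧
    t = trMk (tilde θ) (FreeMonoid.ofList (Sum.inl z :: wl)) ∧
    IA (tilde θ) t = {Sum.inl z} ∧ ReducedWrt θ s t}

end PCM

namespace PCM

attribute [local instance] Classical.propDecidable

section Basics

variable {X : Type*} (r : X → X → Prop)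

/-- word to trace -/
def trL (l : List X) : Trace X r := trMk r (FreeMonoid.ofList l)

lemma trL_append (l₁ l₂ : List X) : trL r (l₁ ++ l₂) = trL r l₁ * trL r l₂ := by
  simp [trL, FreeMonoid.ofList_append, map_mul]

lemma trL_cons (x : X) (l : List X) : trL r (x :: l) = trOf r x * trL r l := by
  have h : FreeMonoid.ofList (x :: l) = FreeMonoid.of x * FreeMonoid.ofList l := rfl
  rw [trL, h, map_mul]; rfl

lemma trL_nil : trL r [] = 1 := map_one _

lemma trL_singleton (x : X) : trL r [x] = trOf r x := rfl

lemma trL_surjective (t : Trace X r) : ∃ l, trL r l = t := by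
  obtain ⟨w, hw⟩ := Con.mk'_surjective (c := traceCon r) t
  exact ⟨FreeMonoid.toList w, by simp only [trL, FreeMonoid.ofList_toList]; exact hw⟩

lemma trOf_comm {x y : X} (h : r x y) : trOf r x * trOf r y = trOf r y * trOf r x := by
  have hc : (traceCon r) (FreeMonoid.of x * FreeMonoid.of y) (FreeMonoid.of y * FreeMonoid.of x) :=
    ConGen.Rel.of _ _ ⟨x, y, h, rfl, rfl⟩
  have := (Con.eq (traceCon r)).2 hc
  calc trOf r x * trOf r y = trMk r (FreeMonoid.of x * FreeMonoid.of y) := (map_mul _ _ _).symm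
    _ = trMk r (FreeMonoid.of y * FreeMonoid.of x) := this
    _ = trOf r y * trOf r x := map_mul _ _ _

/-- lift a monoid hom on words invariant under commutations to traces -/
def trLift {N : Type*} [Monoid N] (f : FreeMonoid X →* N)
    (hf : ∀ x y, r x y → f (FreeMonoid.of x * FreeMonoid.of y) =
      f (FreeMonoid.of y * FreeMonoid.of x)) : Trace X r →* N :=
  Con.lift _ f (Con.conGen_le.2 (fun a b hab => by
    obtain ⟨x, y, hxy, rfl, rfl⟩ := hab
    exact (Con.ker_rel f).2 (hf x y hxy)))

lemma trLift_trL {N : Type*} [Monoid N] (f : FreeMonoid X →* N) (hf) (l : List X) :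
    trLift r f hf (trL r l) = f (FreeMonoid.ofList l) := rfl

/-- length of a trace -/
noncomputable def tlen (t : Trace X r) : ℕ :=
  Multiplicative.toAdd (trLift r
    { toFun := fun w => Multiplicative.ofAdd (FreeMonoid.toList w).length
      map_one' := rfl
      map_mul' := by intro a b; simp [FreeMonoid.toList_mul] }
    (by intro x y _; rfl) t)

lemma tlen_trL (l : List X) : tlen r (trL r l) = l.length := by
  exact rfl

lemma tlen_mul (t t' : Trace X r) : tlen r (t * t') = tlen r t + tlen r t' := by
  simp [tlen, map_mul]

lemma tlen_of (x : X) : tlen r (trOf r x) = 1 := tlen_trL r [x]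

lemma tlen_one : tlen r (1 : Trace X r) = 0 := by
  simpa [trL_nil] using tlen_trL r []

/-- multiset word hom -/
noncomputable def wmset : FreeMonoid X →* Multiplicative (Multiset X) where
  toFun := fun w => Multiplicative.ofAdd (↑(FreeMonoid.toList w) : Multiset X)
  map_one' := rfl
  map_mul' := by
    intro a b
    refine congrArg Multiplicative.ofAdd ?_
    show ((FreeMonoid.toList (a * b) : List X) : Multiset X) = ↑(FreeMonoid.toList a) + ↑(FreeMonoid.toList b)
    rw [FreeMonoid.toList_mul]
    exact Multiset.coe_add _ _

/-- multiset of letters of a trace -/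
noncomputable def tmset (t : Trace X r) : Multiset X :=
  Multiplicative.toAdd (trLift r wmset
    (by
      intro x y _
      refine congrArg Multiplicative.ofAdd ?_
      show ((FreeMonoid.toList (FreeMonoid.of x * FreeMonoid.of y) : List X) : Multiset X)
          = ((FreeMonoid.toList (FreeMonoid.of y * FreeMonoid.of x) : List X) : Multiset X)
      show (([x, y] : List X) : Multiset X) = (([y, x] : List X) : Multiset X)
      exact Quot.sound (List.Perm.swap y x [])) t)

lemma tmset_trL (l : List X) : tmset r (trL r l) = (l : Multiset X) := by
  simp only [tmset, trLift_trL]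
  show Multiplicative.toAdd (Multiplicative.ofAdd (((FreeMonoid.toList (FreeMonoid.ofList l)) : List X) : Multiset X)) = _
  rw [FreeMonoid.toList_ofList]
  rfl

lemma tmset_mul (t t' : Trace X r) : tmset r (t * t') = tmset r t + tmset r t' := by
  simp [tmset, map_mul]

lemma tmset_of (x : X) : tmset r (trOf r x) = {x} := tmset_trL r [x]

end Basics

end PCM
namespace PCM

attribute [local instance] Classical.propDecidable

section Proj

variable {X : Type*} (r : X → X → Prop)

/-- filter a list to two letters -/
noncomputable def pfilter (c d : X) (l : List X) : List X :=
  l.filter (fun x => x = c ∨ x = d)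

lemma pfilter_append (c d : X) (l₁ l₂ : List X) :
    pfilter c d (l₁ ++ l₂) = pfilter c d l₁ ++ pfilter c d l₂ :=
  List.filter_append _ _

lemma pfilter_cons (c d : X) (a : X) (l : List X) :
    pfilter c d (a :: l) = if a = c ∨ a = d then a :: pfilter c d l else pfilter c d l := by
  simp only [pfilter, List.filter_cons]
  by_cases h : a = c ∨ a = d <;> simp [h]

lemma mem_pfilter {c d x : X} {l : List X} (h : x ∈ pfilter c d l) :
    x ∈ l ∧ (x = c ∨ x = d) := by
  have := List.mem_filter.1 h
  exact ⟨this.1, by simpa using this.2⟩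

variable {r}
variable (hsym : ∀ x y, r x y → r y x) (hirr : ∀ x, ¬ r x x)
include hsym hirr

/-- projection of a trace onto a dependent (or equal) pair of letters -/
noncomputable def projT (c d : X) (hcd : ¬ r c d) : Trace X r →* FreeMonoid X :=
  trLift r
    { toFun := fun w => FreeMonoid.ofList (pfilter c d (FreeMonoid.toList w))
      map_one' := rfl
      map_mul' := by
        intro a b
        show FreeMonoid.ofList (pfilter c d (FreeMonoid.toList (a * b))) = _
        rw [FreeMonoid.toList_mul, pfilter_append, FreeMonoid.ofList_append] }
    (by
      intro x y hxy
      show FreeMonoid.ofList (pfilter c d (FreeMonoid.toList (FreeMonoid.of x * FreeMonoid.of y)))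
          = FreeMonoid.ofList (pfilter c d (FreeMonoid.toList (FreeMonoid.of y * FreeMonoid.of x)))
      refine congrArg _ ?_
      show pfilter c d [x, y] = pfilter c d [y, x]
      have hne : ¬ ((x = c ∨ x = d) ∧ (y = c ∨ y = d)) := by
        rintro ⟨(rfl | rfl), (rfl | rfl)⟩
        · exact hirr _ hxy
        · exact hcd hxy
        · exact hcd (hsym _ _ hxy)
        · exact hirr _ hxy
      by_cases hx : x = c ∨ x = d <;> by_cases hy : y = c ∨ y = d <;>
        simp [pfilter_cons, hx, hy] at hne ⊢)

lemma projT_trL (c d : X) (hcd : ¬ r c d) (l : List X) :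
    projT hsym hirr c d hcd (trL r l) = FreeMonoid.ofList (pfilter c d l) := by
  show FreeMonoid.ofList (pfilter c d (FreeMonoid.toList (FreeMonoid.ofList l))) = _
  rw [FreeMonoid.toList_ofList]

/-- projections of equal traces agree, as lists -/
lemma pfilter_eq_of_trL_eq {c d : X} (hcd : ¬ r c d) {lu lv : List X}
    (h : trL r lu = trL r lv) : pfilter c d lu = pfilter c d lv := by
  have := congrArg (projT hsym hirr c d hcd) h
  rw [projT_trL, projT_trL] at this
  have := congrArg FreeMonoid.toList this
  simpa [FreeMonoid.toList_ofList] using this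

omit hsym hirr in
lemma tmset_eq_of_trL_eq {lu lv : List X} (h : trL r lu = trL r lv) :
    (lu : Multiset X) = (lv : Multiset X) := by
  have := congrArg (tmset r) h
  simpa [tmset_trL] using this

omit hsym hirr in
lemma first_split {a : X} : ∀ {l : List X}, a ∈ l → ∃ p q, l = p ++ a :: q ∧ a ∉ p := by
  intro l
  induction l with
  | nil => intro h; cases h
  | cons b l ih =>
    intro h
    by_cases hb : b = a
    · exact ⟨[], l, by simp [hb], by simp⟩
    · have hal : a ∈ l := by
        rcases List.mem_cons.1 h with h' | h'
        · exact absurd h'.symm hb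
        · exact h'
      obtain ⟨p, q, rfl, hnp⟩ := ih hal
      refine ⟨b :: p, q, rfl, ?_⟩
      simp only [List.mem_cons]
      rintro (rfl | hp)
      · exact hb rfl
      · exact hnp hp

omit hsym hirr in
lemma swap_front {a : X} : ∀ (p : List X) (q : List X), (∀ c ∈ p, r a c) →
    trL r (p ++ a :: q) = trOf r a * trL r (p ++ q) := by
  intro p
  induction p with
  | nil => intro q _; simp [trL_cons]
  | cons c p ih =>
    intro q hc
    have h1 : trL r ((c :: p) ++ a :: q) = trOf r c * trL r (p ++ a :: q) := trL_cons r c _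
    rw [h1, ih q (fun x hx => hc x (List.mem_cons_of_mem _ hx)), ← mul_assoc,
      ← trOf_comm r (hc c (List.mem_cons_self)), mul_assoc, ← trL_cons]
    rfl

/-- The projection reconstruction theorem -/
theorem recon : ∀ (lu : List X), ∀ {lv : List X}, (lu : Multiset X) = (lv : Multiset X) →
    (∀ c d, ¬ r c d → pfilter c d lu = pfilter c d lv) → trL r lu = trL r lv := by
  intro lu
  induction lu with
  | nil =>
    intro lv hm _
    have : lv = [] := (Multiset.coe_eq_coe.1 hm.symm).eq_nil
    rw [this]
  | cons a lu ih =>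
    intro lv hm hp
    have ha : a ∈ lv := by
      have h' : a ∈ (lv : Multiset X) := by rw [← hm]; simp
      simpa using h'
    obtain ⟨p, q, rfl, hnp⟩ := first_split ha
    have hcomm : ∀ c ∈ p, r a c := by
      intro c hcp
      by_contra hr
      have hfe := hp a c hr
      have hL : pfilter a c (a :: lu) = a :: pfilter a c lu := by
        rw [pfilter_cons]; simp
      have hR : pfilter a c (p ++ a :: q) = pfilter a c p ++ a :: pfilter a c q := by
        rw [pfilter_append, pfilter_cons]; simp
      rw [hL, hR] at hfe
      -- pfilter a c p is nonempty with head c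
      have hcin : c ∈ pfilter a c p := by
        simp only [pfilter, List.mem_filter]
        exact ⟨hcp, by simp⟩
      rcases hpf : pfilter a c p with _ | ⟨e, rest⟩
      · rw [hpf] at hcin; cases hcin
      · rw [hpf] at hfe
        have he : e ∈ pfilter a c p := by rw [hpf]; exact List.mem_cons_self
        have hep := mem_pfilter he
        have : a = e := by
          have := congrArg List.head? hfe; simpa using this
        rcases hep.2 with h' | h'
        · exact hnp (this ▸ h' ▸ hep.1)
        · exact hnp (this ▸ h' ▸ hep.1)
    have hmset' : (lu : Multiset X) = ((p ++ q : List X) : Multiset X) := by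
      have hperm : (a :: lu).Perm (p ++ a :: q) := Multiset.coe_eq_coe.1 hm
      have h2 : (a :: lu).Perm (a :: (p ++ q)) := hperm.trans List.perm_middle
      exact Multiset.coe_eq_coe.2 ((List.perm_cons a).1 h2)
    have hproj' : ∀ c d, ¬ r c d → pfilter c d lu = pfilter c d (p ++ q) := by
      intro c d hcd
      have hfe := hp c d hcd
      by_cases hacd : a = c ∨ a = d
      · have hL : pfilter c d (a :: lu) = a :: pfilter c d lu := by
          rw [pfilter_cons]; simp [hacd]
        have hpnil : pfilter c d p = [] := by
          simp only [pfilter, List.filter_eq_nil_iff, decide_eq_true_eq]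
          rintro x hxp (rfl | rfl)
          · rcases hacd with rfl | h'
            · exact hnp hxp
            · have hdc : r d x := by rw [← h']; exact hcomm _ hxp
              exact hcd (hsym _ _ hdc)
          · rcases hacd with h' | rfl
            · have hcx : r c x := by rw [← h']; exact hcomm _ hxp
              exact hcd hcx
            · exact hnp hxp
        have hR : pfilter c d (p ++ a :: q) = a :: pfilter c d q := by
          rw [pfilter_append, pfilter_cons]
          simp [hacd, hpnil]
        rw [hL, hR] at hfe
        have htl : pfilter c d lu = pfilter c d q := by
          have := congrArg List.tail hfe; simpa using this
        rw [htl, pfilter_append, hpnil]; rfl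
      · push_neg at hacd
        have hL : pfilter c d (a :: lu) = pfilter c d lu := by
          rw [pfilter_cons]; simp [hacd.1, hacd.2]
        have hR : pfilter c d (p ++ a :: q) = pfilter c d (p ++ q) := by
          rw [pfilter_append, pfilter_cons, pfilter_append]
          simp [hacd.1, hacd.2]
        rw [← hL, ← hR]; exact hfe
    calc trL r (a :: lu) = trOf r a * trL r lu := trL_cons r a lu
      _ = trOf r a * trL r (p ++ q) := by rw [ih hmset' hproj']
      _ = trL r (p ++ a :: q) := (swap_front p q hcomm).symm

end Proj

end PCM
namespace PCM

section Cancel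

variable {X : Type*} {r : X → X → Prop}
variable (hsym : ∀ x y, r x y → r y x) (hirr : ∀ x, ¬ r x x)
include hsym hirr

lemma cancel_left {a : X} {t t' : Trace X r} (h : trOf r a * t = trOf r a * t') : t = t' := by
  obtain ⟨l, rfl⟩ := trL_surjective r t
  obtain ⟨l', rfl⟩ := trL_surjective r t'
  have h2 : trL r (a :: l) = trL r (a :: l') := by rw [trL_cons, trL_cons]; exact h
  apply recon hsym hirr
  · have hm := tmset_eq_of_trL_eq h2
    have h3 : a ::ₘ (l : Multiset X) = a ::ₘ (l' : Multiset X) := hm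
    exact (Multiset.cons_inj_right a).1 h3
  · intro c d hcd
    have hf := pfilter_eq_of_trL_eq hsym hirr hcd h2
    rw [pfilter_cons, pfilter_cons] at hf
    by_cases hac : a = c ∨ a = d
    · rw [if_pos hac, if_pos hac] at hf
      simpa using congrArg List.tail hf
    · rwa [if_neg hac, if_neg hac] at hf

lemma heads_comm {a b : X} {u v : Trace X r} (hne : a ≠ b)
    (h : trOf r a * u = trOf r b * v) :
    r a b ∧ ∃ w, u = trOf r b * w ∧ v = trOf r a * w := by
  obtain ⟨lu, rfl⟩ := trL_surjective r u
  obtain ⟨lv, rfl⟩ := trL_surjective r v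
  have h2 : trL r (a :: lu) = trL r (b :: lv) := by rw [trL_cons, trL_cons]; exact h
  have hrab : r a b := by
    by_contra hr
    have hf := pfilter_eq_of_trL_eq hsym hirr hr h2
    rw [pfilter_cons, pfilter_cons, if_pos (Or.inl rfl), if_pos (Or.inr rfl)] at hf
    exact hne (by simpa using congrArg List.head? hf)
  refine ⟨hrab, ?_⟩
  have hbl : b ∈ lu := by
    have hm := tmset_eq_of_trL_eq h2
    have hb1 : b ∈ ((a :: lu : List X) : Multiset X) := by rw [hm]; simp
    have hb2 : b ∈ a :: lu := by simpa using hb1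
    rcases List.mem_cons.1 hb2 with h' | h'
    · exact absurd h'.symm hne
    · exact h'
  obtain ⟨p, q, rfl, hnp⟩ := first_split hbl
  have hcomm : ∀ c ∈ p, r b c := by
    intro c hcp
    by_contra hrc
    have hbc : b ≠ c := fun h' => hnp (h' ▸ hcp)
    have hac : a ≠ c := by
      rintro rfl
      exact hrc (hsym _ _ hrab)
    have hf := pfilter_eq_of_trL_eq hsym hirr hrc h2
    rw [pfilter_cons, pfilter_cons, if_neg (by rintro (rfl | rfl); exacts [hne rfl, hac rfl]),
      if_pos (Or.inl rfl), pfilter_append, pfilter_cons, if_pos (Or.inl rfl)] at hf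
    have hcin : c ∈ pfilter b c p := List.mem_filter.2 ⟨hcp, by simp⟩
    cases hpf : pfilter b c p with
    | nil => rw [hpf] at hcin; cases hcin
    | cons e rest =>
      rw [hpf] at hf
      have he := mem_pfilter (hpf ▸ (List.mem_cons_self (a := e) (l := rest)))
      have heb : e = b := by simpa using congrArg List.head? hf
      rcases he.2 with h' | h'
      · exact hnp (h' ▸ he.1)
      · exact hbc (heb.symm.trans h')
  have hu : trL r (p ++ b :: q) = trOf r b * trL r (p ++ q) := swap_front p q hcomm
  refine ⟨trL r (p ++ q), hu, ?_⟩
  have h3 : trOf r b * (trOf r a * trL r (p ++ q)) = trOf r b * trL r lv := by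
    rw [← mul_assoc, ← trOf_comm r hrab, mul_assoc, ← hu]
    exact h
  exact (cancel_left hsym hirr h3).symm

omit hsym hirr in
lemma IA_head (a : X) (t : Trace X r) : a ∈ IA r (trOf r a * t) := ⟨t, rfl⟩

omit hsym hirr in
lemma not_IA_one (a : X) : a ∉ IA r (1 : Trace X r) := by
  rintro ⟨w, hw⟩
  have := congrArg (tlen r) hw
  rw [tlen_one, tlen_mul, tlen_of] at this
  omega

lemma IA_cons {a c : X} {t : Trace X r} (h : c ∈ IA r (trOf r a * t)) :
    c = a ∨ (r a c ∧ c ∈ IA r t) := by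
  obtain ⟨w, hw⟩ := h
  by_cases hca : c = a
  · exact Or.inl hca
  · have := heads_comm hsym hirr (fun h' => hca h'.symm) hw
    exact Or.inr ⟨this.1, by obtain ⟨w', h1, _⟩ := this.2; exact ⟨w', h1⟩⟩

omit hsym hirr in
lemma IA_cons_of {a c : X} {t : Trace X r} (hac : r a c) (h : c ∈ IA r t) :
    c ∈ IA r (trOf r a * t) := by
  obtain ⟨w, hw⟩ := h
  exact ⟨trOf r a * w, by rw [hw, ← mul_assoc, trOf_comm r hac, mul_assoc]⟩

lemma IA_prepend {a : X} : ∀ (lp : List X) {q : Trace X r}, (∀ c ∈ lp, r a c) →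
    a ∈ IA r q → a ∈ IA r (trL r lp * q) := by
  intro lp
  induction lp with
  | nil => intro q _ h; rwa [trL_nil, one_mul]
  | cons c lp ih =>
    intro q hc h
    rw [trL_cons, mul_assoc]
    exact IA_cons_of (hsym _ _ (hc c (List.mem_cons_self)))
      (ih (fun x hx => hc x (List.mem_cons_of_mem _ hx)) h)

lemma split_initial {a : X} : ∀ (lp : List X) {t q : Trace X r},
    trOf r a * t = trL r lp * q →
    (∃ p', trL r lp = trOf r a * p' ∧ t = p' * q) ∨
    (∃ q', q = trOf r a * q' ∧ t = trL r lp * q' ∧ ∀ c ∈ lp, r a c) := by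
  intro lp
  induction lp with
  | nil =>
    intro t q h
    rw [trL_nil, one_mul] at h
    exact Or.inr ⟨t, h.symm, by rw [trL_nil, one_mul], by simp⟩
  | cons b lp ih =>
    intro t q h
    rw [trL_cons, mul_assoc] at h
    by_cases hab : a = b
    · subst hab
      left
      exact ⟨trL r lp, trL_cons r a lp, cancel_left hsym hirr h⟩
    · obtain ⟨hrab, w, htw, hlw⟩ := heads_comm hsym hirr hab h
      rcases ih hlw.symm with ⟨p₂, hp₂, hw₂⟩ | ⟨q₂, hq₂, hw₂, hall⟩
      · left
        refine ⟨trOf r b * p₂, ?_, ?_⟩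
        · rw [trL_cons, hp₂, ← mul_assoc, ← trOf_comm r hrab, mul_assoc]
        · rw [htw, hw₂, mul_assoc]
      · right
        refine ⟨q₂, hq₂, ?_, ?_⟩
        · rw [htw, hw₂, trL_cons, mul_assoc]
        · intro c hc
          rcases List.mem_cons.1 hc with rfl | hc'
          · exact hrab
          · exact hall c hc'

omit hsym hirr in
lemma mem_tmset_of_IA {c : X} {t : Trace X r} (h : c ∈ IA r t) : c ∈ tmset r t := by
  obtain ⟨w, hw⟩ := h
  rw [hw, tmset_mul, tmset_of]
  simp

end Cancel

end PCM
namespace PCM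

section Reduction

variable {A : Type*} {θ : A → A → Prop}

/-- bar involution on signed letters -/
def bar : A ⊕ A → A ⊕ A := Sum.elim Sum.inr Sum.inl

lemma unbar_bar (x : A ⊕ A) : unbar (bar x) = unbar x := by cases x <;> rfl

lemma bar_bar (x : A ⊕ A) : bar (bar x) = x := by cases x <;> rfl

lemma bar_inl (a : A) : bar (Sum.inl a) = Sum.inr a := rfl

lemma tilde_bar_left (x y : A ⊕ A) : tilde θ (bar x) y ↔ tilde θ x y := by
  unfold tilde; rw [unbar_bar]

lemma tilde_bar_right (x y : A ⊕ A) : tilde θ x (bar y) ↔ tilde θ x y := by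
  unfold tilde; rw [unbar_bar]

variable (hanti : ∀ a, ¬ θ a a) (hsymm : ∀ a b, θ a b → θ b a)
include hanti hsymm

attribute [local instance] Classical.propDecidable

omit hanti in
lemma tilde_symm : ∀ x y : A ⊕ A, tilde θ x y → tilde θ y x := fun _ _ h => hsymm _ _ h

omit hsymm in
lemma tilde_irr : ∀ x : A ⊕ A, ¬ tilde θ x x := fun _ h => hanti _ h

omit hsymm in
lemma not_tilde_bar (x : A ⊕ A) : ¬ tilde θ x (bar x) := by
  unfold tilde; rw [unbar_bar]; exact hanti _

omit hsymm in
lemma bar_ne_of_tilde {x y : A ⊕ A} (h : tilde θ x y) : bar x ≠ y := by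
  rintro rfl
  exact not_tilde_bar hanti _ h

omit hsymm in
lemma ne_of_tilde {x y : A ⊕ A} (h : tilde θ x y) : x ≠ y := by
  rintro rfl; exact tilde_irr hanti x h

/-- a trace over the doubled alphabet is irreducible -/
def Irred (θ : A → A → Prop) (t : Trace (A ⊕ A) (tilde θ)) : Prop :=
  ¬ ∃ u x v, t = u * (trOf (tilde θ) x * trOf (tilde θ) (bar x)) * v

omit hanti hsymm in
lemma irred_one : Irred θ (1 : Trace (A ⊕ A) (tilde θ)) := by
  rintro ⟨u, x, v, h⟩
  have := congrArg (tlen (tilde θ)) h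
  simp [tlen_one, tlen_mul, tlen_of] at this
  omega

omit hanti hsymm in
lemma irred_of_len_one {t : Trace (A ⊕ A) (tilde θ)} (h1 : tlen (tilde θ) t = 1) : Irred θ t := by
  rintro ⟨u, x, v, h⟩
  have := congrArg (tlen (tilde θ)) h
  rw [h1] at this
  simp [tlen_mul, tlen_of] at this
  omega

omit hanti hsymm in
lemma irred_factor {u v : Trace (A ⊕ A) (tilde θ)} (h : Irred θ (u * v)) :
    Irred θ u ∧ Irred θ v := by
  constructor
  · rintro ⟨p, x, q, rfl⟩
    exact h ⟨p, x, q * v, by simp [mul_assoc]⟩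
  · rintro ⟨p, x, q, rfl⟩
    exact h ⟨u * p, x, q, by simp [mul_assoc]⟩

lemma irred_cons {x : A ⊕ A} {t : Trace (A ⊕ A) (tilde θ)}
    (hI : Irred θ t) (hx : (bar x) ∉ IA (tilde θ) t) : Irred θ (trOf (tilde θ) x * t) := by
  have hsymT := tilde_symm (θ := θ) hsymm
  have hirrT := tilde_irr (θ := θ) hanti
  rintro ⟨u, y, v, heq⟩
  obtain ⟨lu, rfl⟩ := trL_surjective _ u
  rw [mul_assoc] at heq
  rcases split_initial hsymT hirrT lu heq with ⟨p', _, ht⟩ | ⟨q', hq', ht, hall⟩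
  · exact hI ⟨p', y, v, by rw [ht, ← mul_assoc]⟩
  · by_cases hxy : x = y
    · subst hxy
      have h1 : trOf (tilde θ) x * q' = trOf (tilde θ) x * (trOf (tilde θ) (bar x) * v) := by
        rw [← hq', mul_assoc]
      have hq : q' = trOf (tilde θ) (bar x) * v := cancel_left hsymT hirrT h1
      apply hx
      rw [ht, hq]
      refine IA_prepend hsymT hirrT lu ?_ (IA_head _ _)
      intro c hc
      exact (tilde_bar_left x c).2 (hall c hc)
    · have h1 : trOf (tilde θ) x * q' = trOf (tilde θ) y * (trOf (tilde θ) (bar y) * v) := by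
        rw [← hq', mul_assoc]
      obtain ⟨hrxy, w, hqw, hw⟩ := heads_comm hsymT hirrT hxy h1
      have hxbary : x ≠ bar y := by
        rintro rfl
        exact not_tilde_bar hanti y (hsymT _ _ hrxy)
      obtain ⟨_, w₂, _, hww⟩ := heads_comm hsymT hirrT (fun h => hxbary h.symm) hw
      exact hI ⟨trL (tilde θ) lu, y, w₂, by
        rw [ht, hqw, hww]; simp [mul_assoc]⟩

/-- the set of irreducible traces -/
def IrrT (θ : A → A → Prop) := {t : Trace (A ⊕ A) (tilde θ) // Irred θ t}

/-- the letter action on irreducible traces -/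
noncomputable def sig (x : A ⊕ A) (t : IrrT θ) : IrrT θ :=
  if h : (bar x) ∈ IA (tilde θ) t.1 then
    ⟨Classical.choose h, by
      have hspec := Classical.choose_spec h
      exact (irred_factor (hspec ▸ t.2)).2⟩
  else ⟨trOf (tilde θ) x * t.1, irred_cons hanti hsymm t.2 h⟩

lemma sig_cancel {x : A ⊕ A} {t : IrrT θ} {u : Trace (A ⊕ A) (tilde θ)}
    (h : t.1 = trOf (tilde θ) (bar x) * u) : (sig hanti hsymm x t).1 = u := by
  have hmem : (bar x) ∈ IA (tilde θ) t.1 := ⟨u, h⟩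
  simp only [sig, hmem, ↓reduceDIte]
  have hspec := Classical.choose_spec hmem
  exact cancel_left (tilde_symm hsymm) (tilde_irr hanti) (hspec.symm.trans h)

lemma sig_add {x : A ⊕ A} {t : IrrT θ}
    (h : (bar x) ∉ IA (tilde θ) t.1) : (sig hanti hsymm x t).1 = trOf (tilde θ) x * t.1 := by
  simp only [sig, h, ↓reduceDIte]

lemma sig_sig_bar (x : A ⊕ A) (t : IrrT θ) :
    sig hanti hsymm (bar x) (sig hanti hsymm x t) = t := by
  apply Subtype.ext
  by_cases h : (bar x) ∈ IA (tilde θ) t.1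
  · obtain ⟨u, hu⟩ := h
    have h1 : (sig hanti hsymm x t).1 = u := sig_cancel hanti hsymm hu
    have h2 : (bar (bar x)) ∉ IA (tilde θ) u := by
      rintro ⟨u', hu'⟩
      rw [bar_bar] at hu'
      exact t.2 ⟨1, bar x, u', by rw [hu, hu', one_mul, ← mul_assoc, bar_bar]⟩
    have h2' : (bar (bar x)) ∉ IA (tilde θ) (sig hanti hsymm x t).1 := by
      rw [h1]; exact h2
    rw [sig_add hanti hsymm h2', h1]
    exact hu.symm
  · have h1 : (sig hanti hsymm x t).1 = trOf (tilde θ) x * t.1 := sig_add hanti hsymm h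
    have h2 : (sig hanti hsymm x t).1 = trOf (tilde θ) (bar (bar x)) * t.1 := by
      rw [h1, bar_bar]
    exact sig_cancel hanti hsymm h2

/-- the permutation of irreducible traces induced by a letter -/
noncomputable def permL (x : A ⊕ A) : Equiv.Perm (IrrT θ) where
  toFun := sig hanti hsymm x
  invFun := sig hanti hsymm (bar x)
  left_inv := sig_sig_bar hanti hsymm x
  right_inv := fun t => by
    have := sig_sig_bar hanti hsymm (bar x) t
    rwa [bar_bar] at this

lemma permL_inv (x : A ⊕ A) : (permL hanti hsymm x)⁻¹ = permL hanti hsymm (bar x) :=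
  Equiv.ext fun _ => rfl

lemma sig_comm {x y : A ⊕ A} (hr : tilde θ x y) (t : IrrT θ) :
    sig hanti hsymm x (sig hanti hsymm y t) = sig hanti hsymm y (sig hanti hsymm x t) := by
  have hsymT := tilde_symm (θ := θ) hsymm
  have hirrT := tilde_irr (θ := θ) hanti
  have hrbxy : tilde θ (bar x) y := (tilde_bar_left x y).2 hr
  have hrxby : tilde θ x (bar y) := (tilde_bar_right x y).2 hr
  have hrbxby : tilde θ (bar x) (bar y) := (tilde_bar_left _ _).2 hrxby
  apply Subtype.ext
  by_cases hy : (bar y) ∈ IA (tilde θ) t.1 <;> by_cases hx : (bar x) ∈ IA (tilde θ) t.1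
  · -- both cancel
    obtain ⟨u, hu⟩ := hy
    obtain ⟨u', hu'⟩ := hx
    have hne : bar y ≠ bar x := by
      intro h
      have h2 : y = x := by
        have := congrArg bar h
        rwa [bar_bar, bar_bar] at this
      exact ne_of_tilde hanti hr h2.symm
    obtain ⟨_, w, hw1, hw2⟩ := heads_comm hsymT hirrT hne (hu.symm.trans hu')
    have e1 : (sig hanti hsymm y t).1 = u := sig_cancel hanti hsymm hu
    have e2 : (sig hanti hsymm x t).1 = u' := sig_cancel hanti hsymm hu'
    rw [sig_cancel hanti hsymm (e1.trans hw1), sig_cancel hanti hsymm (e2.trans hw2)]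
  · -- y cancels, x adds
    obtain ⟨u, hu⟩ := hy
    have e1 : (sig hanti hsymm y t).1 = u := sig_cancel hanti hsymm hu
    have hxu : (bar x) ∉ IA (tilde θ) u := by
      intro hm
      exact hx (hu ▸ IA_cons_of (hsymT _ _ hrbxby) hm)
    have hxu' : (bar x) ∉ IA (tilde θ) (sig hanti hsymm y t).1 := by
      rw [e1]; exact hxu
    have e2 : (sig hanti hsymm x (sig hanti hsymm y t)).1 = trOf (tilde θ) x * u := by
      rw [sig_add hanti hsymm hxu', e1]
    have e3 : (sig hanti hsymm x t).1 = trOf (tilde θ) x * t.1 := sig_add hanti hsymm hx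
    have e4 : (sig hanti hsymm x t).1 = trOf (tilde θ) (bar y) * (trOf (tilde θ) x * u) := by
      rw [e3, hu, ← mul_assoc, trOf_comm _ hrxby, mul_assoc]
    rw [e2, sig_cancel hanti hsymm e4]
  · -- x cancels, y adds
    obtain ⟨u, hu⟩ := hx
    have e1 : (sig hanti hsymm x t).1 = u := sig_cancel hanti hsymm hu
    have hyu : (bar y) ∉ IA (tilde θ) u := by
      intro hm
      exact hy (hu ▸ IA_cons_of (hrbxby) hm)
    have hyu' : (bar y) ∉ IA (tilde θ) (sig hanti hsymm x t).1 := by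
      rw [e1]; exact hyu
    have e2 : (sig hanti hsymm y (sig hanti hsymm x t)).1 = trOf (tilde θ) y * u := by
      rw [sig_add hanti hsymm hyu', e1]
    have e3 : (sig hanti hsymm y t).1 = trOf (tilde θ) y * t.1 := sig_add hanti hsymm hy
    have e4 : (sig hanti hsymm y t).1 = trOf (tilde θ) (bar x) * (trOf (tilde θ) y * u) := by
      rw [e3, hu, ← mul_assoc, trOf_comm _ (hsymT _ _ hrbxy), mul_assoc]
    rw [e2, sig_cancel hanti hsymm e4]
  · -- both add
    have hyx : (bar y) ∉ IA (tilde θ) (trOf (tilde θ) x * t.1) := by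
      intro hm
      rcases IA_cons hsymT hirrT hm with h' | ⟨_, h2⟩
      · exact bar_ne_of_tilde hanti (hsymT _ _ hr) h'
      · exact hy h2
    have hxy' : (bar x) ∉ IA (tilde θ) (trOf (tilde θ) y * t.1) := by
      intro hm
      rcases IA_cons hsymT hirrT hm with h' | ⟨_, h2⟩
      · exact bar_ne_of_tilde hanti hr h'
      · exact hx h2
    have e1 : (sig hanti hsymm y t).1 = trOf (tilde θ) y * t.1 := sig_add hanti hsymm hy
    have e2 : (sig hanti hsymm x t).1 = trOf (tilde θ) x * t.1 := sig_add hanti hsymm hx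
    have hxy'' : (bar x) ∉ IA (tilde θ) (sig hanti hsymm y t).1 := by
      rw [e1]; exact hxy'
    have hyx' : (bar y) ∉ IA (tilde θ) (sig hanti hsymm x t).1 := by
      rw [e2]; exact hyx
    rw [sig_add hanti hsymm hxy'', sig_add hanti hsymm hyx', e1, e2,
      ← mul_assoc, trOf_comm _ hr, mul_assoc]

end Reduction

end PCM
namespace PCM

section NF

attribute [local instance] Classical.propDecidable

variable {A : Type*} {θ : A → A → Prop}

lemma rel_one {α : Type*} (rels : Set (FreeGroup α)) {w : FreeGroup α} (hw : w ∈ rels) :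
    (QuotientGroup.mk w : PresentedGroup rels) = 1 :=
  (QuotientGroup.eq_one_iff w).2 (Subgroup.subset_normalClosure hw)

lemma comm_gOf {a b : A} (hab : θ a b) : Commute (gOf θ a) (gOf θ b) := by
  have h1 : (QuotientGroup.mk (FreeGroup.of a * FreeGroup.of b * (FreeGroup.of a)⁻¹ *
      (FreeGroup.of b)⁻¹) : PresentedGroup (pcRels θ)) = 1 :=
    rel_one (pcRels θ) ⟨a, b, hab, rfl⟩
  have h2 : gOf θ a * gOf θ b * (gOf θ a)⁻¹ * (gOf θ b)⁻¹ = 1 := h1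
  exact commutatorElement_eq_one_iff_commute.1 (by rw [commutatorElement_def]; exact h2)

/-- the value of a signed letter in the group -/
def sval (θ : A → A → Prop) : A ⊕ A → PCGroup A θ :=
  Sum.elim (gOf θ) (fun a => (gOf θ a)⁻¹)

variable {s : Trace (A ⊕ A) (tilde θ) →* PCGroup A θ}

lemma s_trOf (hs : IsSection θ s) (x : A ⊕ A) : s (trOf (tilde θ) x) = sval θ x := by
  cases x with
  | inl a => exact hs.1 a
  | inr a => exact hs.2 a

lemma s_redex (hs : IsSection θ s) (x : A ⊕ A) :
    s (trOf (tilde θ) x * trOf (tilde θ) (bar x)) = 1 := by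
  rw [map_mul, s_trOf hs, s_trOf hs]
  cases x with
  | inl a => exact mul_inv_cancel _
  | inr a => exact inv_mul_cancel _

lemma haslen_iff {t : Trace (A ⊕ A) (tilde θ)} {n : ℕ} :
    HasLen (tilde θ) t n ↔ tlen (tilde θ) t = n := by
  constructor
  · rintro ⟨l, h1, h2⟩
    have : trL (tilde θ) l = t := h1
    rw [← this, tlen_trL, h2]
  · rintro rfl
    obtain ⟨l, rfl⟩ := trL_surjective (tilde θ) t
    exact ⟨l, rfl, (tlen_trL _ l).symm⟩

variable (hanti : ∀ a, ¬ θ a a) (hsymm : ∀ a b, θ a b → θ b a)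
include hanti hsymm

/-- the action of the group on irreducible traces -/
noncomputable def alphaHom : PCGroup A θ →* Equiv.Perm (IrrT θ) :=
  PresentedGroup.toGroup (f := fun a => permL hanti hsymm (Sum.inl a))
    (by
      rintro w ⟨a, b, hab, rfl⟩
      simp only [map_mul, map_inv, FreeGroup.lift_apply_of]
      have hc : permL hanti hsymm (Sum.inl a) * permL hanti hsymm (Sum.inl b) =
          permL hanti hsymm (Sum.inl b) * permL hanti hsymm (Sum.inl a) := by
        apply Equiv.ext
        intro t
        refine sig_comm hanti hsymm ?_ t
        show θ (unbar (Sum.inl a)) (unbar (Sum.inl b))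
        exact hab
      rw [hc]
      group)

lemma alphaHom_gOf (a : A) : alphaHom hanti hsymm (gOf θ a) = permL hanti hsymm (Sum.inl a) :=
  PresentedGroup.toGroup.of _

lemma alphaHom_s_trOf (hs : IsSection θ s) (x : A ⊕ A) :
    alphaHom hanti hsymm (s (trOf (tilde θ) x)) = permL hanti hsymm x := by
  cases x with
  | inl a => rw [s_trOf hs]; exact alphaHom_gOf hanti hsymm a
  | inr a =>
    rw [s_trOf hs]
    show alphaHom hanti hsymm ((gOf θ a)⁻¹) = _
    rw [map_inv, alphaHom_gOf hanti hsymm a, permL_inv]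
    rfl

lemma nf_fixed (hs : IsSection θ s) :
    ∀ (l : List (A ⊕ A)) (h : Irred θ (trL (tilde θ) l)),
      alphaHom hanti hsymm (s (trL (tilde θ) l)) ⟨1, irred_one⟩ = ⟨trL (tilde θ) l, h⟩ := by
  intro l
  induction l with
  | nil =>
    intro h
    apply Subtype.ext
    have h0 : trL (tilde θ) ([] : List (A ⊕ A)) = 1 := trL_nil _
    show ((alphaHom hanti hsymm (s (trL (tilde θ) []))) ⟨1, irred_one⟩).1 = trL (tilde θ) []
    rw [h0, map_one, map_one]
    rfl
  | cons x l ih =>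
    intro h
    have hcons := trL_cons (tilde θ) x l
    have hIl : Irred θ (trL (tilde θ) l) := (irred_factor (hcons ▸ h)).2
    have hnot : (bar x) ∉ IA (tilde θ) (trL (tilde θ) l) := by
      rintro ⟨u, hu⟩
      exact h ⟨1, x, u, by rw [hcons, hu, one_mul, mul_assoc]⟩
    apply Subtype.ext
    show ((alphaHom hanti hsymm (s (trL (tilde θ) (x :: l)))) ⟨1, irred_one⟩).1
      = trL (tilde θ) (x :: l)
    rw [hcons, map_mul, map_mul]
    show ((alphaHom hanti hsymm (s (trOf (tilde θ) x)))
        ((alphaHom hanti hsymm (s (trL (tilde θ) l))) ⟨1, irred_one⟩)).1 = _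
    rw [ih hIl, alphaHom_s_trOf hanti hsymm hs]
    show (sig hanti hsymm x ⟨trL (tilde θ) l, hIl⟩).1 = _
    exact sig_add hanti hsymm (t := ⟨trL (tilde θ) l, hIl⟩) hnot

lemma nf_unique (hs : IsSection θ s) {t t' : Trace (A ⊕ A) (tilde θ)}
    (h : Irred θ t) (h' : Irred θ t') (hst : s t = s t') : t = t' := by
  obtain ⟨l, rfl⟩ := trL_surjective (tilde θ) t
  obtain ⟨l', rfl⟩ := trL_surjective (tilde θ) t'
  have := nf_fixed hanti hsymm hs l h
  rw [hst, nf_fixed hanti hsymm hs l' h'] at this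
  exact (congrArg Subtype.val this).symm

lemma reduce_to_irred (hs : IsSection θ s) :
    ∀ (n : ℕ) (t : Trace (A ⊕ A) (tilde θ)), tlen (tilde θ) t ≤ n →
      ∃ t', Irred θ t' ∧ s t' = s t ∧ tlen (tilde θ) t' ≤ tlen (tilde θ) t := by
  intro n
  induction n with
  | zero =>
    intro t ht
    refine ⟨t, ?_, rfl, le_rfl⟩
    by_contra hI
    obtain ⟨u, x, v, rfl⟩ := not_not.1 hI
    have h2 : tlen (tilde θ) (u * (trOf (tilde θ) x * trOf (tilde θ) (bar x)) * v)
        = tlen (tilde θ) u + (1 + 1) + tlen (tilde θ) v := by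
      rw [tlen_mul, tlen_mul, tlen_mul, tlen_of, tlen_of]
    omega
  | succ n ih =>
    intro t ht
    by_cases hI : Irred θ t
    · exact ⟨t, hI, rfl, le_rfl⟩
    · obtain ⟨u, x, v, rfl⟩ := not_not.1 hI
      have hlen : tlen (tilde θ) (u * (trOf (tilde θ) x * trOf (tilde θ) (bar x)) * v)
          = tlen (tilde θ) (u * v) + 2 := by
        rw [tlen_mul, tlen_mul, tlen_mul, tlen_mul, tlen_of, tlen_of]
        omega
      have hsv : s (u * v) = s (u * (trOf (tilde θ) x * trOf (tilde θ) (bar x)) * v) := by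
        rw [map_mul, map_mul, map_mul, s_redex hs, mul_one]
      obtain ⟨t', hI', hs', hl'⟩ := ih (u * v) (by omega)
      exact ⟨t', hI', hs'.trans hsv, by omega⟩

lemma irred_reducedWrt (hs : IsSection θ s) {t : Trace (A ⊕ A) (tilde θ)}
    (h : Irred θ t) : ReducedWrt θ s t := by
  intro t' n n' hst hn hn'
  rw [haslen_iff] at hn hn'
  obtain ⟨t₁, hI₁, hs₁, hl₁⟩ := reduce_to_irred hanti hsymm hs (tlen (tilde θ) t') t' le_rfl
  have := nf_unique hanti hsymm hs hI₁ h (hs₁.trans hst)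
  rw [← hn, ← hn', ← this]
  exact hl₁

end NF

end PCM
namespace PCM

section Main

attribute [local instance] Classical.propDecidable

variable {A : Type*} {θ : A → A → Prop} {B : Set A}
variable {s : Trace (A ⊕ A) (tilde θ) →* PCGroup A θ}
variable (hanti : ∀ a, ¬ θ a a) (hsymm : ∀ a b, θ a b → θ b a)
include hanti hsymm

lemma sval_conj_eq {z : A} {c : A ⊕ A} (hr : tilde θ (Sum.inl z) c) :
    (sval θ c)⁻¹ * gOf θ z * sval θ c = gOf θ z := by
  have hc : Commute (gOf θ z) (sval θ (c : A ⊕ A)) := by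
    have h0 : Commute (gOf θ z) (gOf θ (unbar c)) := comm_gOf hr
    cases c with
    | inl a => exact h0
    | inr a => exact h0.inv_right
  rw [mul_assoc, hc.eq, ← mul_assoc, inv_mul_cancel, one_mul]

lemma main_conj (hs : IsSection θ s) :
    ∀ (n : ℕ) (wl : List (A ⊕ A)), wl.length ≤ n → (∀ x ∈ wl, unbar x ∈ B) →
    ∀ z, z ∉ B →
    ∃ vl : List (A ⊕ A), (∀ x ∈ vl, unbar x ∈ B) ∧
      IA (tilde θ) (trL (tilde θ) (Sum.inl z :: vl)) = {Sum.inl z} ∧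
      ReducedWrt θ s (trL (tilde θ) (Sum.inl z :: vl)) ∧
      (s (trL (tilde θ) vl))⁻¹ * gOf θ z * s (trL (tilde θ) vl)
        = (s (trL (tilde θ) wl))⁻¹ * gOf θ z * s (trL (tilde θ) wl) := by
  have hsymT := tilde_symm (θ := θ) hsymm
  have hirrT := tilde_irr (θ := θ) hanti
  intro n
  induction n with
  | zero =>
    intro wl hlen _ z _
    have hnil : wl = [] := List.eq_nil_of_length_eq_zero (Nat.le_zero.1 hlen)
    subst hnil
    refine ⟨[], by simp, ?_, ?_, rfl⟩
    · apply Set.eq_singleton_iff_unique_mem.2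
      constructor
      · rw [trL_cons]; exact IA_head _ _
      · intro c hc
        rw [trL_cons] at hc
        rcases IA_cons hsymT hirrT hc with h' | ⟨_, h2⟩
        · exact h'
        · rw [trL_nil] at h2
          exact absurd h2 (not_IA_one c)
    · exact irred_reducedWrt hanti hsymm hs
        (irred_of_len_one (by rw [tlen_trL]; rfl))
  | succ n ih =>
    intro wl hlen hB z hz
    by_cases hIr : Irred θ (trL (tilde θ) (Sum.inl z :: wl))
    · by_cases hIA : ∀ c ∈ IA (tilde θ) (trL (tilde θ) (Sum.inl z :: wl)), c = Sum.inl z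
      · refine ⟨wl, hB, ?_, irred_reducedWrt hanti hsymm hs hIr, rfl⟩
        apply Set.eq_singleton_iff_unique_mem.2
        exact ⟨by rw [trL_cons]; exact IA_head _ _, hIA⟩
      · push_neg at hIA
        obtain ⟨c, hc, hcne⟩ := hIA
        rw [trL_cons] at hc
        rcases IA_cons hsymT hirrT hc with h' | ⟨hr, hcIA⟩
        · exact absurd h' hcne
        · obtain ⟨u, hu⟩ := hcIA
          obtain ⟨lu, hlu⟩ := trL_surjective (tilde θ) u
          have hmset : (wl : Multiset (A ⊕ A)) = c ::ₘ (lu : Multiset (A ⊕ A)) := by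
            have h0 : trL (tilde θ) wl = trOf (tilde θ) c * trL (tilde θ) lu := by
              rw [hlu]; exact hu
            have := congrArg (tmset (tilde θ)) h0
            rwa [tmset_trL, tmset_mul, tmset_of, tmset_trL, Multiset.singleton_add] at this
          have hcB : unbar c ∈ B := by
            apply hB
            have : c ∈ (wl : Multiset (A ⊕ A)) := by rw [hmset]; simp
            simpa using this
          have hluB : ∀ x ∈ lu, unbar x ∈ B := by
            intro x hx
            apply hB
            have : x ∈ (wl : Multiset (A ⊕ A)) := by
              rw [hmset]; exact Multiset.mem_cons_of_mem (by simpa using hx)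
            simpa using this
          have hlulen : lu.length + 1 = wl.length := by
            have := congrArg Multiset.card hmset
            simpa using this.symm
          obtain ⟨vl, hvB, hvIA, hvR, hveq⟩ := ih lu (by omega) hluB z hz
          refine ⟨vl, hvB, hvIA, hvR, ?_⟩
          have hswl : s (trL (tilde θ) wl) = sval θ c * s (trL (tilde θ) lu) := by
            have h0 : trL (tilde θ) wl = trOf (tilde θ) c * trL (tilde θ) lu := by
              rw [hlu]; exact hu
            rw [h0, map_mul, s_trOf hs]
          have key := sval_conj_eq hanti hsymm hr
          rw [hveq, hswl, mul_inv_rev]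
          calc (s (trL (tilde θ) lu))⁻¹ * gOf θ z * s (trL (tilde θ) lu)
              = (s (trL (tilde θ) lu))⁻¹ * ((sval θ c)⁻¹ * gOf θ z * sval θ c) *
                s (trL (tilde θ) lu) := by rw [key]
            _ = (s (trL (tilde θ) lu))⁻¹ * (sval θ c)⁻¹ * gOf θ z *
                (sval θ c * s (trL (tilde θ) lu)) := by group
    · obtain ⟨u, y, v, heq⟩ := not_not.1 hIr
      obtain ⟨lu, hlu⟩ := trL_surjective (tilde θ) u
      rw [trL_cons, ← hlu, mul_assoc] at heq
      have hm := congrArg (tmset (tilde θ)) heq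
      simp only [tmset_mul, tmset_of, tmset_trL] at hm
      have hymem : (y = Sum.inl z ∨ y ∈ wl) ∧ (bar y = Sum.inl z ∨ bar y ∈ wl) := by
        constructor
        · have hy : y ∈ ({Sum.inl z} : Multiset (A ⊕ A)) + ↑wl := by rw [hm]; simp
          rcases Multiset.mem_add.1 hy with h' | h'
          · exact Or.inl (by simpa using h')
          · exact Or.inr (by simpa using h')
        · have hy : bar y ∈ ({Sum.inl z} : Multiset (A ⊕ A)) + ↑wl := by rw [hm]; simp
          rcases Multiset.mem_add.1 hy with h' | h'
          · exact Or.inl (by simpa using h')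
          · exact Or.inr (by simpa using h')
      have hyne : y ≠ Sum.inl z := by
        rintro rfl
        rcases hymem.2 with h' | h'
        · exact absurd h' (by simp [bar])
        · exact hz (by simpa [bar, unbar] using hB _ h')
      have hbyne : bar y ≠ Sum.inl z := by
        intro h0
        have hyz : y = Sum.inr z := by
          have := congrArg bar h0
          rwa [bar_bar] at this
        subst hyz
        rcases hymem.1 with h' | h'
        · exact absurd h' (by simp)
        · exact hz (by simpa [unbar] using hB _ h')
      rcases split_initial hsymT hirrT lu heq with ⟨p', hp', ht⟩ | ⟨q', hq', ht, _⟩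
      · -- trL lu = z * p' , trL wl = p' * ((y ȳ) v)
        obtain ⟨lp, hlp⟩ := trL_surjective (tilde θ) p'
        obtain ⟨lv, hlv⟩ := trL_surjective (tilde θ) v
        have htw : trL (tilde θ) wl =
            trL (tilde θ) lp * (trOf (tilde θ) y * trOf (tilde θ) (bar y)) * trL (tilde θ) lv := by
          rw [ht, ← hlp, ← hlv]
          simp [mul_assoc]
        have hm2 := congrArg (tmset (tilde θ)) htw
        simp only [tmset_mul, tmset_of, tmset_trL] at hm2
        have hmemw : ∀ x ∈ lp ++ lv, x ∈ wl := by
          intro x hx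
          have hxm : x ∈ (wl : Multiset (A ⊕ A)) := by
            rw [hm2]
            rcases List.mem_append.1 hx with h' | h' <;> simp [h']
          simpa using hxm
        have hlen2 := congrArg Multiset.card hm2
        simp at hlen2
        have hseq : s (trL (tilde θ) (lp ++ lv)) = s (trL (tilde θ) wl) := by
          rw [htw, trL_append, map_mul, map_mul, map_mul, s_redex hs, mul_one]
        obtain ⟨vl, hvB, hvIA, hvR, hveq⟩ := ih (lp ++ lv)
          (by simp only [List.length_append]; omega)
          (fun x hx => hB x (hmemw x hx)) z hz
        exact ⟨vl, hvB, hvIA, hvR, by rw [hveq, hseq]⟩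
      · -- (y ȳ) v = z * q'
        have h1 : trOf (tilde θ) (Sum.inl z) * q' =
            trOf (tilde θ) y * (trOf (tilde θ) (bar y) * v) := by
          rw [← hq', mul_assoc]
        obtain ⟨_, w, hqw, hw⟩ := heads_comm hsymT hirrT (fun h => hyne h.symm) h1
        obtain ⟨_, w₂, _, hww⟩ := heads_comm hsymT hirrT hbyne hw
        obtain ⟨lw, hlw⟩ := trL_surjective (tilde θ) w₂
        have htw : trL (tilde θ) wl =
            trL (tilde θ) lu * (trOf (tilde θ) y * trOf (tilde θ) (bar y)) * trL (tilde θ) lw := by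
          rw [ht, hqw, hww, ← hlw]
          simp [mul_assoc]
        have hm2 := congrArg (tmset (tilde θ)) htw
        simp only [tmset_mul, tmset_of, tmset_trL] at hm2
        have hmemw : ∀ x ∈ lu ++ lw, x ∈ wl := by
          intro x hx
          have hxm : x ∈ (wl : Multiset (A ⊕ A)) := by
            rw [hm2]
            rcases List.mem_append.1 hx with h' | h' <;> simp [h']
          simpa using hxm
        have hlen2 := congrArg Multiset.card hm2
        simp at hlen2
        have hseq : s (trL (tilde θ) (lu ++ lw)) = s (trL (tilde θ) wl) := by
          rw [htw, trL_append, map_mul, map_mul, map_mul, s_redex hs, mul_one]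
        obtain ⟨vl, hvB, hvIA, hvR, hveq⟩ := ih (lu ++ lw)
          (by simp only [List.length_append]; omega)
          (fun x hx => hB x (hmemw x hx)) z hz
        exact ⟨vl, hvB, hvIA, hvR, by rw [hveq, hseq]⟩

end Main

end PCM
namespace PCM

section Assembly

attribute [local instance] Classical.propDecidable

variable {A : Type*} {θ : A → A → Prop} {B : Set A}
variable {s : Trace (A ⊕ A) (tilde θ) →* PCGroup A θ}
variable (hanti : ∀ a, ¬ θ a a) (hsymm : ∀ a b, θ a b → θ b a) (hs : IsSection θ s)

omit hanti hsymm hs in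
lemma commutator_triv {G' : Type*} [Group G'] {x y : G'} (h : x * y = y * x) :
    x * y * x⁻¹ * y⁻¹ = 1 := by
  rw [h]; group

omit hanti hsymm hs in
lemma conj_conj {G' : Type*} [Group G'] (a b t : G') :
    a * (b * t * b⁻¹) * a⁻¹ = (a * b) * t * (a * b)⁻¹ := by group

omit hanti hsymm hs in
lemma closure_range_pg {α : Type*} (rels : Set (FreeGroup α)) :
    Subgroup.closure (Set.range (PresentedGroup.of : α → PresentedGroup rels)) = ⊤ := by
  rw [eq_top_iff]
  intro x _
  refine QuotientGroup.induction_on x ?_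
  intro w
  refine FreeGroup.induction_on w ?_ ?_ ?_ ?_
  · exact one_mem _
  · intro a
    exact Subgroup.subset_closure ⟨a, rfl⟩
  · intro a h
    have : ((FreeGroup.of a)⁻¹ : FreeGroup α) = (FreeGroup.of a : FreeGroup α)⁻¹ := rfl
    show (QuotientGroup.mk ((FreeGroup.of a)⁻¹ : FreeGroup α) :
      PresentedGroup rels) ∈ _
    rw [this, QuotientGroup.mk_inv]
    exact inv_mem h
  · intro a b ha hb
    show (QuotientGroup.mk (a * b) : PresentedGroup rels) ∈ _
    rw [QuotientGroup.mk_mul]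
    exact mul_mem ha hb

include hanti hsymm hs

lemma conj_mem_rho {z : A} (hz : z ∉ B) {wl : List (A ⊕ A)}
    (hwl : ∀ x ∈ wl, unbar x ∈ B) :
    (s (trL (tilde θ) wl))⁻¹ * gOf θ z * s (trL (tilde θ) wl) ∈ rhoSet θ B s := by
  obtain ⟨vl, h1, h2, h3, h4⟩ := main_conj hanti hsymm hs wl.length wl le_rfl hwl z hz
  exact ⟨z, hz, vl, h1, h2, h3, h4.symm⟩

lemma gOf_mem_rho {z : A} (hz : z ∉ B) : gOf θ z ∈ rhoSet θ B s := by
  have h := conj_mem_rho hanti hsymm hs hz (wl := []) (by simp)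
  rw [trL_nil, map_one] at h
  simpa using h

lemma conj_rho_r {g : PCGroup A θ} (hg : g ∈ rhoSet θ B s) {b : A} (hb : b ∈ B) :
    (gOf θ b)⁻¹ * g * gOf θ b ∈ rhoSet θ B s := by
  obtain ⟨z, hz, wl, hwl, _, _, rfl⟩ := hg
  have h := conj_mem_rho hanti hsymm hs hz (wl := wl ++ [Sum.inl b])
    (by intro x hx
        rcases List.mem_append.1 hx with h' | h'
        · exact hwl x h'
        · simp at h'; subst h'; exact hb)
  have hsv : s (trL (tilde θ) (wl ++ [Sum.inl b])) = s (trL (tilde θ) wl) * gOf θ b := by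
    rw [trL_append, map_mul, trL_singleton, s_trOf hs]
    rfl
  rw [hsv] at h
  have : (s (trL (tilde θ) wl) * gOf θ b)⁻¹ * gOf θ z * (s (trL (tilde θ) wl) * gOf θ b)
      = (gOf θ b)⁻¹ * ((s (trL (tilde θ) wl))⁻¹ * gOf θ z * s (trL (tilde θ) wl)) * gOf θ b := by
    group
  rwa [this] at h

lemma conj_rho_l {g : PCGroup A θ} (hg : g ∈ rhoSet θ B s) {b : A} (hb : b ∈ B) :
    gOf θ b * g * (gOf θ b)⁻¹ ∈ rhoSet θ B s := by
  obtain ⟨z, hz, wl, hwl, _, _, rfl⟩ := hg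
  have h := conj_mem_rho hanti hsymm hs hz (wl := wl ++ [Sum.inr b])
    (by intro x hx
        rcases List.mem_append.1 hx with h' | h'
        · exact hwl x h'
        · simp at h'; subst h'; exact hb)
  have hsv : s (trL (tilde θ) (wl ++ [Sum.inr b])) = s (trL (tilde θ) wl) * (gOf θ b)⁻¹ := by
    rw [trL_append, map_mul, trL_singleton, s_trOf hs]
    rfl
  rw [hsv] at h
  have : (s (trL (tilde θ) wl) * (gOf θ b)⁻¹)⁻¹ * gOf θ z * (s (trL (tilde θ) wl) * (gOf θ b)⁻¹)
      = gOf θ b * ((s (trL (tilde θ) wl))⁻¹ * gOf θ z * s (trL (tilde θ) wl)) * (gOf θ b)⁻¹ := by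
    group
  rwa [this] at h

/-- the commutation relation on the canonical generators -/
@[reducible] def relN (θ : A → A → Prop) (B : Set A) (s : Trace (A ⊕ A) (tilde θ) →* PCGroup A θ) :
    (rhoSet θ B s) → (rhoSet θ B s) → Prop :=
  fun t t' => t ≠ t' ∧ (t : PCGroup A θ) * (t' : PCGroup A θ) =
    (t' : PCGroup A θ) * (t : PCGroup A θ)

omit hanti hsymm hs in
lemma comm_gOf_gen {X : Type*} {r : X → X → Prop} {a b : X} (hab : r a b) :
    Commute (PresentedGroup.of (rels := pcRels r) a) (PresentedGroup.of (rels := pcRels r) b) :=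
  comm_gOf hab

/-- the canonical evaluation homomorphism -/
noncomputable def eHom : PCGroup (rhoSet θ B s) (relN θ B s) →* PCGroup A θ :=
  PresentedGroup.toGroup (rels := pcRels (relN θ B s))
    (f := fun (t : rhoSet θ B s) => (t : PCGroup A θ))
    (by
      rintro w ⟨t, t', ⟨_, hcm⟩, rfl⟩
      simp only [map_mul, map_inv, FreeGroup.lift_apply_of]
      exact commutator_triv hcm)

omit hanti hsymm hs in
lemma eHom_of (t : rhoSet θ B s) : eHom (PresentedGroup.of t) = (t : PCGroup A θ) := by
  unfold eHom
  exact PresentedGroup.toGroup.of _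

/-- conjugation endomorphism of the presented group on the generators -/
noncomputable def endOf (g : PCGroup A θ)
    (hg : ∀ p ∈ rhoSet θ B s, g * p * g⁻¹ ∈ rhoSet θ B s) :
    PCGroup (rhoSet θ B s) (relN θ B s) →* PCGroup (rhoSet θ B s) (relN θ B s) :=
  PresentedGroup.toGroup (rels := pcRels (relN θ B s))
    (f := fun (t : rhoSet θ B s) =>
      PresentedGroup.of (⟨g * (t : PCGroup A θ) * g⁻¹, hg _ t.2⟩ : rhoSet θ B s))
    (by
      rintro w ⟨t, t', ⟨hne, hcm⟩, rfl⟩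
      simp only [map_mul, map_inv, FreeGroup.lift_apply_of]
      refine commutator_triv (comm_gOf (?_ : relN θ B s _ _)).eq
      constructor
      · intro h
        apply hne
        apply Subtype.ext
        have hv : g * (t : PCGroup A θ) * g⁻¹ = g * (t' : PCGroup A θ) * g⁻¹ :=
          congrArg Subtype.val h
        have := mul_right_cancel hv
        exact mul_left_cancel this
      · show (g * (t : PCGroup A θ) * g⁻¹) * (g * (t' : PCGroup A θ) * g⁻¹)
          = (g * (t' : PCGroup A θ) * g⁻¹) * (g * (t : PCGroup A θ) * g⁻¹)
        calc (g * (t : PCGroup A θ) * g⁻¹) * (g * (t' : PCGroup A θ) * g⁻¹)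
            = g * ((t : PCGroup A θ) * (t' : PCGroup A θ)) * g⁻¹ := by group
          _ = g * ((t' : PCGroup A θ) * (t : PCGroup A θ)) * g⁻¹ := by rw [hcm]
          _ = (g * (t' : PCGroup A θ) * g⁻¹) * (g * (t : PCGroup A θ) * g⁻¹) := by group)

end Assembly

end PCM
namespace PCM

section Assembly2

attribute [local instance] Classical.propDecidable

variable {A : Type*} {θ : A → A → Prop} {B : Set A}
variable {s : Trace (A ⊕ A) (tilde θ) →* PCGroup A θ}
variable (hanti : ∀ a, ¬ θ a a) (hsymm : ∀ a b, θ a b → θ b a) (hs : IsSection θ s)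

omit hanti hsymm hs in
lemma inl_inr_comm {N G : Type*} [Group N] [Group G] {φ : G →* MulAut N} {n : N} {g : G}
    (h : φ g n = n) :
    SemidirectProduct.inl (φ := φ) n * SemidirectProduct.inr g =
      SemidirectProduct.inr g * SemidirectProduct.inl n := by
  have h2 := SemidirectProduct.inl_aut (φ := φ) g n
  rw [h] at h2
  calc SemidirectProduct.inl (φ := φ) n * SemidirectProduct.inr g
      = (SemidirectProduct.inr g * SemidirectProduct.inl n *
          SemidirectProduct.inr g⁻¹) * SemidirectProduct.inr g := by rw [← h2]
    _ = SemidirectProduct.inr g * SemidirectProduct.inl n *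
          (SemidirectProduct.inr g⁻¹ * SemidirectProduct.inr g) := by rw [mul_assoc]
    _ = SemidirectProduct.inr g * SemidirectProduct.inl n := by
          rw [← map_mul, inv_mul_cancel, map_one, mul_one]

include hanti hsymm hs

omit hanti hsymm hs in
lemma endOf_of (g : PCGroup A θ)
    (hg : ∀ p ∈ rhoSet θ B s, g * p * g⁻¹ ∈ rhoSet θ B s) (t : rhoSet θ B s) :
    endOf g hg (PresentedGroup.of t) =
      PresentedGroup.of (⟨g * (t : PCGroup A θ) * g⁻¹, hg _ t.2⟩ : rhoSet θ B s) := by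
  unfold endOf
  exact PresentedGroup.toGroup.of _

/-- conjugation automorphism -/
noncomputable def autOf (g : PCGroup A θ)
    (hg1 : ∀ p ∈ rhoSet θ B s, g * p * g⁻¹ ∈ rhoSet θ B s)
    (hg2 : ∀ p ∈ rhoSet θ B s, g⁻¹ * p * g ∈ rhoSet θ B s) :
    MulAut (PCGroup (rhoSet θ B s) (relN θ B s)) where
  toFun := endOf g hg1
  invFun := endOf g⁻¹ (fun p hp => by simpa using hg2 p hp)
  left_inv := fun n => by
    have hcomp : (endOf g⁻¹ (fun p hp => by simpa using hg2 p hp)).comp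
        (endOf g hg1) = MonoidHom.id _ := by
      apply PresentedGroup.ext
      intro t
      rw [MonoidHom.comp_apply, MonoidHom.id_apply, endOf_of, endOf_of]
      exact congrArg PresentedGroup.of (Subtype.ext (by
        show g⁻¹ * (g * (t : PCGroup A θ) * g⁻¹) * (g⁻¹)⁻¹ = (t : PCGroup A θ)
        group))
    exact DFunLike.congr_fun hcomp n
  right_inv := fun n => by
    have hcomp : (endOf g hg1).comp
        (endOf g⁻¹ (fun p hp => by simpa using hg2 p hp)) = MonoidHom.id _ := by
      apply PresentedGroup.ext
      intro t
      rw [MonoidHom.comp_apply, MonoidHom.id_apply, endOf_of, endOf_of]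
      exact congrArg PresentedGroup.of (Subtype.ext (by
        show g * (g⁻¹ * (t : PCGroup A θ) * (g⁻¹)⁻¹) * g⁻¹ = (t : PCGroup A θ)
        group))
    exact DFunLike.congr_fun hcomp n
  map_mul' := map_mul _

/-- the relation on `B` -/
def relB (θ : A → A → Prop) (B : Set A) : B → B → Prop := fun b b' => θ b b'

/-- the automorphism attached to a generator of `B` -/
noncomputable def autB (b : B) : MulAut (PCGroup (rhoSet θ B s) (relN θ B s)) :=
  autOf (gOf θ b)
    (fun p hp => conj_rho_l hanti hsymm hs hp b.2)
    (fun p hp => conj_rho_r hanti hsymm hs hp b.2)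

lemma autB_comm {b b' : B} (hbb' : θ (b : A) (b' : A)) :
    autB hanti hsymm hs b * autB hanti hsymm hs b' =
      autB hanti hsymm hs b' * autB hanti hsymm hs b := by
  have hc : Commute (gOf θ (b : A)) (gOf θ (b' : A)) := comm_gOf hbb'
  have hcomp : (endOf (gOf θ (b : A)) (fun p hp => conj_rho_l hanti hsymm hs hp b.2)).comp
      (endOf (gOf θ (b' : A)) (fun p hp => conj_rho_l hanti hsymm hs hp b'.2)) =
      (endOf (gOf θ (b' : A)) (fun p hp => conj_rho_l hanti hsymm hs hp b'.2)).comp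
      (endOf (gOf θ (b : A)) (fun p hp => conj_rho_l hanti hsymm hs hp b.2)) := by
    apply PresentedGroup.ext
    intro t
    rw [MonoidHom.comp_apply, MonoidHom.comp_apply, endOf_of, endOf_of, endOf_of, endOf_of]
    refine congrArg PresentedGroup.of (Subtype.ext ?_)
    show gOf θ (b : A) * (gOf θ (b' : A) * (t : PCGroup A θ) * (gOf θ (b' : A))⁻¹) *
        (gOf θ (b : A))⁻¹ =
      gOf θ (b' : A) * (gOf θ (b : A) * (t : PCGroup A θ) * (gOf θ (b : A))⁻¹) *
        (gOf θ (b' : A))⁻¹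
    rw [conj_conj, conj_conj, hc.eq]
  exact MulEquiv.ext (fun n => DFunLike.congr_fun hcomp n)

/-- the action of `F(B)` on the presented group -/
noncomputable def psiHom :
    PCGroup B (relB θ B) →* MulAut (PCGroup (rhoSet θ B s) (relN θ B s)) :=
  PresentedGroup.toGroup (rels := pcRels (relB θ B))
    (f := autB hanti hsymm hs)
    (by
      rintro w ⟨b, b', hbb', rfl⟩
      simp only [map_mul, map_inv, FreeGroup.lift_apply_of]
      exact commutator_triv (autB_comm hanti hsymm hs hbb'))

/-- letter images in the semidirect product -/
noncomputable def fSemi (a : A) :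
    SemidirectProduct (PCGroup (rhoSet θ B s) (relN θ B s)) (PCGroup B (relB θ B))
      (psiHom hanti hsymm hs) :=
  if h : a ∈ B then SemidirectProduct.inr (PresentedGroup.of (⟨a, h⟩ : B))
  else SemidirectProduct.inl (PresentedGroup.of
    (⟨gOf θ a, gOf_mem_rho hanti hsymm hs h⟩ : rhoSet θ B s))

lemma psiHom_of (b : B) :
    psiHom hanti hsymm hs (PresentedGroup.of b) = autB hanti hsymm hs b := by
  unfold psiHom
  exact PresentedGroup.toGroup.of _

lemma psi_fix {a : A} {b : B} (hab : θ a b) (hra : a ∉ B) :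
    psiHom hanti hsymm hs (PresentedGroup.of b)
      (PresentedGroup.of (⟨gOf θ a, gOf_mem_rho hanti hsymm hs hra⟩ : rhoSet θ B s)) =
    PresentedGroup.of (⟨gOf θ a, gOf_mem_rho hanti hsymm hs hra⟩ : rhoSet θ B s) := by
  rw [psiHom_of]
  show endOf (gOf θ (b : A)) (fun p hp => conj_rho_l hanti hsymm hs hp b.2)
    (PresentedGroup.of _) = _
  rw [endOf_of]
  refine congrArg PresentedGroup.of (Subtype.ext ?_)
  show gOf θ (b : A) * gOf θ a * (gOf θ (b : A))⁻¹ = gOf θ a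
  have hc : Commute (gOf θ a) (gOf θ (b : A)) := comm_gOf hab
  rw [← hc.eq, mul_assoc, mul_inv_cancel, mul_one]

/-- the comparison homomorphism into the semidirect product -/
noncomputable def hHom : PCGroup A θ →*
    SemidirectProduct (PCGroup (rhoSet θ B s) (relN θ B s)) (PCGroup B (relB θ B))
      (psiHom hanti hsymm hs) :=
  PresentedGroup.toGroup (rels := pcRels θ) (f := fSemi hanti hsymm hs)
    (by
      rintro w ⟨a, b, hab, rfl⟩
      simp only [map_mul, map_inv, FreeGroup.lift_apply_of]
      apply commutator_triv
      unfold fSemi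
      by_cases ha : a ∈ B <;> by_cases hb : b ∈ B
      · rw [dif_pos ha, dif_pos hb, ← map_mul, ← map_mul]
        exact congrArg _ (comm_gOf (show relB θ B ⟨a, ha⟩ ⟨b, hb⟩ from hab)).eq
      · rw [dif_pos ha, dif_neg hb]
        exact (inl_inr_comm (psi_fix hanti hsymm hs (hsymm a b hab) hb)).symm
      · rw [dif_neg ha, dif_pos hb]
        exact inl_inr_comm (psi_fix hanti hsymm hs hab ha)
      · rw [dif_neg ha, dif_neg hb]
        by_cases hteq : (⟨gOf θ a, gOf_mem_rho hanti hsymm hs ha⟩ : rhoSet θ B s) =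
            ⟨gOf θ b, gOf_mem_rho hanti hsymm hs hb⟩
        · rw [hteq]
        · rw [← map_mul, ← map_mul]
          refine congrArg _ (comm_gOf (show relN θ B s _ _ from ⟨hteq, ?_⟩)).eq
          exact (comm_gOf hab).eq)

lemma hHom_of_B {b : A} (hb : b ∈ B) :
    hHom hanti hsymm hs (gOf θ b) = SemidirectProduct.inr (PresentedGroup.of (⟨b, hb⟩ : B)) := by
  have h1 : hHom (B := B) hanti hsymm hs (gOf θ b) = fSemi (B := B) hanti hsymm hs b := by
    unfold hHom
    exact PresentedGroup.toGroup.of _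
  rw [h1]
  unfold fSemi
  rw [dif_pos hb]

lemma hHom_of_Z {z : A} (hz : z ∉ B) :
    hHom hanti hsymm hs (gOf θ z) = SemidirectProduct.inl (PresentedGroup.of
      (⟨gOf θ z, gOf_mem_rho hanti hsymm hs hz⟩ : rhoSet θ B s)) := by
  have h1 : hHom (B := B) hanti hsymm hs (gOf θ z) = fSemi (B := B) hanti hsymm hs z := by
    unfold hHom
    exact PresentedGroup.toGroup.of _
  rw [h1]
  unfold fSemi
  rw [dif_neg hz]

end Assembly2

end PCM
namespace PCM

section Assembly3

attribute [local instance] Classical.propDecidable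

variable {A : Type*} {θ : A → A → Prop} {B : Set A}
variable {s : Trace (A ⊕ A) (tilde θ) →* PCGroup A θ}
variable (hanti : ∀ a, ¬ θ a a) (hsymm : ∀ a b, θ a b → θ b a) (hs : IsSection θ s)
include hanti hsymm hs

lemma key_ind :
    ∀ (wl : List (A ⊕ A)), (∀ x ∈ wl, unbar x ∈ B) →
    ∃ k : PCGroup B (relB θ B),
      hHom hanti hsymm hs (s (trL (tilde θ) wl)) = SemidirectProduct.inr k ∧
      ∀ (u : rhoSet θ B s)
        (hu : (s (trL (tilde θ) wl))⁻¹ * (u : PCGroup A θ) * s (trL (tilde θ) wl) ∈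
          rhoSet θ B s),
        (psiHom hanti hsymm hs k⁻¹) (PresentedGroup.of u) =
          PresentedGroup.of (⟨_, hu⟩ : rhoSet θ B s) := by
  intro wl
  induction wl with
  | nil =>
    intro _
    refine ⟨1, by rw [trL_nil, map_one, map_one]; exact (map_one _).symm, ?_⟩
    intro u hu
    rw [inv_one, map_one]
    show PresentedGroup.of u = _
    refine congrArg PresentedGroup.of (Subtype.ext ?_)
    show (u : PCGroup A θ) = (s (trL (tilde θ) []))⁻¹ * (u : PCGroup A θ) * s (trL (tilde θ) [])
    rw [trL_nil, map_one]
    group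
  | cons x l ih =>
    intro hB'
    have hxB : unbar x ∈ B := hB' x (List.mem_cons_self)
    have hlB : ∀ y ∈ l, unbar y ∈ B := fun y hy => hB' y (List.mem_cons_of_mem _ hy)
    obtain ⟨k, hk1, hk2⟩ := ih hlB
    have hsx : s (trL (tilde θ) (x :: l)) = sval θ x * s (trL (tilde θ) l) := by
      rw [trL_cons, map_mul, s_trOf hs]
    cases x with
    | inl b =>
      have hbB : b ∈ B := hxB
      refine ⟨PresentedGroup.of (⟨b, hbB⟩ : B) * k, ?_, ?_⟩
      · rw [hsx, map_mul, hk1]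
        rw [show (sval θ (Sum.inl b) : PCGroup A θ) = gOf θ b from rfl,
          hHom_of_B hanti hsymm hs hbB, ← map_mul]
      · intro u hu
        rw [mul_inv_rev, map_mul]
        have hveq : (s (trL (tilde θ) l))⁻¹ *
            ((gOf θ b)⁻¹ * (u : PCGroup A θ) * gOf θ b) * s (trL (tilde θ) l)
            = (s (trL (tilde θ) (Sum.inl b :: l)))⁻¹ * (u : PCGroup A θ) *
              s (trL (tilde θ) (Sum.inl b :: l)) := by
          rw [hsx]
          show _ = (gOf θ b * s (trL (tilde θ) l))⁻¹ * _ * (gOf θ b * s (trL (tilde θ) l))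
          group
        have hmem1 : (gOf θ b)⁻¹ * (u : PCGroup A θ) * gOf θ b ∈ rhoSet θ B s :=
          conj_rho_r hanti hsymm hs u.2 hxB
        have hu₁ : (s (trL (tilde θ) l))⁻¹ *
            ((⟨(gOf θ b)⁻¹ * (u : PCGroup A θ) * gOf θ b, hmem1⟩ : rhoSet θ B s) :
              PCGroup A θ) * s (trL (tilde θ) l) ∈ rhoSet θ B s := by
          show (s (trL (tilde θ) l))⁻¹ *
            ((gOf θ b)⁻¹ * (u : PCGroup A θ) * gOf θ b) * s (trL (tilde θ) l) ∈ _
          rw [hveq]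
          exact hu
        have hstep : (psiHom hanti hsymm hs (PresentedGroup.of (⟨b, hbB⟩ : B))⁻¹)
            (PresentedGroup.of u) =
            PresentedGroup.of (⟨(gOf θ b)⁻¹ * (u : PCGroup A θ) * gOf θ b, hmem1⟩ :
              rhoSet θ B s) := by
          rw [map_inv, psiHom_of]
          rw [MulAut.inv_def, MulEquiv.symm_apply_eq]
          show PresentedGroup.of u = endOf (gOf θ ((⟨b, hbB⟩ : B) : A))
            (fun p hp => conj_rho_l hanti hsymm hs hp (⟨b, hbB⟩ : B).2)
            (PresentedGroup.of
              (⟨(gOf θ b)⁻¹ * (u : PCGroup A θ) * gOf θ b, hmem1⟩ : rhoSet θ B s))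
          rw [endOf_of]
          refine (congrArg PresentedGroup.of (Subtype.ext ?_)).symm
          show gOf θ b * ((gOf θ b)⁻¹ * (u : PCGroup A θ) * gOf θ b) * (gOf θ b)⁻¹
            = (u : PCGroup A θ)
          group
        show (psiHom hanti hsymm hs k⁻¹)
            ((psiHom hanti hsymm hs (PresentedGroup.of (⟨b, hbB⟩ : B))⁻¹)
              (PresentedGroup.of u)) = _
        rw [hstep, hk2 _ hu₁]
        exact congrArg PresentedGroup.of (Subtype.ext hveq)
    | inr b =>
      have hbB : b ∈ B := hxB
      refine ⟨(PresentedGroup.of (⟨b, hbB⟩ : B))⁻¹ * k, ?_, ?_⟩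
      · rw [hsx, map_mul, hk1]
        rw [show (sval θ (Sum.inr b) : PCGroup A θ) = (gOf θ b)⁻¹ from rfl,
          map_inv, hHom_of_B hanti hsymm hs hbB, ← map_inv, ← map_mul]
      · intro u hu
        rw [mul_inv_rev, inv_inv, map_mul]
        have hveq : (s (trL (tilde θ) l))⁻¹ *
            (gOf θ b * (u : PCGroup A θ) * (gOf θ b)⁻¹) * s (trL (tilde θ) l)
            = (s (trL (tilde θ) (Sum.inr b :: l)))⁻¹ * (u : PCGroup A θ) *
              s (trL (tilde θ) (Sum.inr b :: l)) := by
          rw [hsx]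
          show _ = ((gOf θ b)⁻¹ * s (trL (tilde θ) l))⁻¹ * _ *
            ((gOf θ b)⁻¹ * s (trL (tilde θ) l))
          group
        have hmem1 : gOf θ b * (u : PCGroup A θ) * (gOf θ b)⁻¹ ∈ rhoSet θ B s :=
          conj_rho_l hanti hsymm hs u.2 hxB
        have hu₁ : (s (trL (tilde θ) l))⁻¹ *
            ((⟨gOf θ b * (u : PCGroup A θ) * (gOf θ b)⁻¹, hmem1⟩ : rhoSet θ B s) :
              PCGroup A θ) * s (trL (tilde θ) l) ∈ rhoSet θ B s := by
          show (s (trL (tilde θ) l))⁻¹ *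
            (gOf θ b * (u : PCGroup A θ) * (gOf θ b)⁻¹) * s (trL (tilde θ) l) ∈ _
          rw [hveq]
          exact hu
        have hstep : (psiHom hanti hsymm hs (PresentedGroup.of (⟨b, hbB⟩ : B)))
            (PresentedGroup.of u) =
            PresentedGroup.of (⟨gOf θ b * (u : PCGroup A θ) * (gOf θ b)⁻¹, hmem1⟩ :
              rhoSet θ B s) := by
          rw [psiHom_of]
          show endOf (gOf θ ((⟨b, hbB⟩ : B) : A))
            (fun p hp => conj_rho_l hanti hsymm hs hp (⟨b, hbB⟩ : B).2)
            (PresentedGroup.of u) = _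
          rw [endOf_of]
        show (psiHom hanti hsymm hs k⁻¹)
            ((psiHom hanti hsymm hs (PresentedGroup.of (⟨b, hbB⟩ : B)))
              (PresentedGroup.of u)) = _
        rw [hstep, hk2 _ hu₁]
        exact congrArg PresentedGroup.of (Subtype.ext hveq)

lemma hHom_eHom :
    (hHom hanti hsymm hs).comp (eHom (θ := θ) (B := B) (s := s)) =
      SemidirectProduct.inl := by
  apply PresentedGroup.ext
  intro t
  rw [MonoidHom.comp_apply, eHom_of]
  obtain ⟨z, hz, wl, hwl, hIA, hR, hval⟩ := t.2
  have hval' : (t : PCGroup A θ) =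
      (s (trL (tilde θ) wl))⁻¹ * gOf θ z * s (trL (tilde θ) wl) := hval
  obtain ⟨k, hk1, hk2⟩ := key_ind hanti hsymm hs wl hwl
  have hu' : (s (trL (tilde θ) wl))⁻¹ *
      ((⟨gOf θ z, gOf_mem_rho hanti hsymm hs hz⟩ : rhoSet θ B s) : PCGroup A θ) *
      s (trL (tilde θ) wl) ∈ rhoSet θ B s := by
    show (s (trL (tilde θ) wl))⁻¹ * gOf θ z * s (trL (tilde θ) wl) ∈ _
    rw [← hval']
    exact t.2
  have h1 : hHom hanti hsymm hs (t : PCGroup A θ) =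
      SemidirectProduct.inr k⁻¹ *
        SemidirectProduct.inl (PresentedGroup.of
          (⟨gOf θ z, gOf_mem_rho hanti hsymm hs hz⟩ : rhoSet θ B s)) *
        SemidirectProduct.inr k := by
    rw [hval', map_mul, map_mul, map_inv, hk1, hHom_of_Z hanti hsymm hs hz, ← map_inv]
  have h2 : SemidirectProduct.inr (φ := psiHom hanti hsymm hs) k⁻¹ *
      SemidirectProduct.inl (PresentedGroup.of
        (⟨gOf θ z, gOf_mem_rho hanti hsymm hs hz⟩ : rhoSet θ B s)) *
      SemidirectProduct.inr k =
      SemidirectProduct.inl ((psiHom hanti hsymm hs k⁻¹) (PresentedGroup.of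
        (⟨gOf θ z, gOf_mem_rho hanti hsymm hs hz⟩ : rhoSet θ B s))) := by
    have h3 := SemidirectProduct.inl_aut (φ := psiHom hanti hsymm hs) k⁻¹
      (PresentedGroup.of (⟨gOf θ z, gOf_mem_rho hanti hsymm hs hz⟩ : rhoSet θ B s))
    rw [inv_inv] at h3
    exact h3.symm
  rw [h1, h2, hk2 _ hu']
  exact congrArg SemidirectProduct.inl (congrArg PresentedGroup.of (Subtype.ext hval'.symm))

end Assembly3

end PCM
namespace PCM

section Assembly4

attribute [local instance] Classical.propDecidable

variable {A : Type*} {θ : A → A → Prop} {B : Set A}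
variable {s : Trace (A ⊕ A) (tilde θ) →* PCGroup A θ}
variable (hanti : ∀ a, ¬ θ a a) (hsymm : ∀ a b, θ a b → θ b a) (hs : IsSection θ s)
include hanti hsymm hs

lemma conj_closure {g : PCGroup A θ}
    (hg : ∀ p ∈ rhoSet θ B s, g * p * g⁻¹ ∈ rhoSet θ B s) :
    ∀ n ∈ Subgroup.closure (rhoSet θ B s), g * n * g⁻¹ ∈ Subgroup.closure (rhoSet θ B s) := by
  intro n hn
  have hle : Subgroup.closure (rhoSet θ B s) ≤
      (Subgroup.closure (rhoSet θ B s)).comap (MulAut.conj g).toMonoidHom := by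
    rw [Subgroup.closure_le]
    intro p hp
    show (MulAut.conj g) p ∈ Subgroup.closure (rhoSet θ B s)
    rw [MulAut.conj_apply]
    exact Subgroup.subset_closure (hg p hp)
  have := hle hn
  rwa [Subgroup.mem_comap, MulEquiv.coe_toMonoidHom, MulAut.conj_apply] at this

lemma closure_rho_normal : (Subgroup.closure (rhoSet θ B s)).Normal := by
  have htop : ∀ g : PCGroup A θ, g ∈ Subgroup.closure (Set.range (gOf θ)) := by
    intro g
    have : Subgroup.closure (Set.range (gOf θ)) = ⊤ := closure_range_pg (pcRels θ)
    rw [this]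
    trivial
  have hP : ∀ g : PCGroup A θ,
      (∀ n ∈ Subgroup.closure (rhoSet θ B s), g * n * g⁻¹ ∈ Subgroup.closure (rhoSet θ B s)) ∧
      (∀ n ∈ Subgroup.closure (rhoSet θ B s), g⁻¹ * n * g ∈ Subgroup.closure (rhoSet θ B s)) := by
    intro g
    refine Subgroup.closure_induction ?_ ?_ ?_ ?_ (htop g)
    · rintro x ⟨a, rfl⟩
      by_cases ha : a ∈ B
      · constructor
        · exact conj_closure hanti hsymm hs
            (fun p hp => conj_rho_l hanti hsymm hs hp ha)
        · intro n hn
          have h2 := conj_closure hanti hsymm hs (g := (gOf θ a)⁻¹)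
            (fun p hp => by
              rw [inv_inv]
              exact conj_rho_r hanti hsymm hs hp ha) n hn
          rwa [inv_inv] at h2
      · have hmem : gOf θ a ∈ Subgroup.closure (rhoSet θ B s) :=
          Subgroup.subset_closure (gOf_mem_rho hanti hsymm hs ha)
        constructor
        · intro n hn
          exact mul_mem (mul_mem hmem hn) (inv_mem hmem)
        · intro n hn
          exact mul_mem (mul_mem (inv_mem hmem) hn) hmem
    · constructor <;> intro n hn <;> simpa using hn
    · intro x y _ _ hx hy
      constructor
      · intro n hn
        have h1 := hx.1 _ (hy.1 n hn)
        rw [show x * (y * n * y⁻¹) * x⁻¹ = (x * y) * n * (x * y)⁻¹ from conj_conj x y n] at h1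
        exact h1
      · intro n hn
        have h1 := hy.2 _ (hx.2 n hn)
        rw [show y⁻¹ * (x⁻¹ * n * x) * y = (x * y)⁻¹ * n * (x * y) from by group] at h1
        exact h1
    · intro x _ hx
      constructor
      · intro n hn
        have := hx.2 n hn
        simpa using this
      · intro n hn
        have := hx.1 n hn
        simpa using this
  exact ⟨fun n hn g => (hP g).1 n hn⟩

lemma closure_rho_eq :
    Subgroup.closure (rhoSet θ B s) = Subgroup.normalClosure (gOf θ '' {a | a ∉ B}) := by
  apply le_antisymm
  · rw [Subgroup.closure_le]
    rintro g ⟨z, hz, wl, hwl, _, _, rfl⟩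
    have hzmem : gOf θ z ∈ Subgroup.normalClosure (gOf θ '' {a | a ∉ B}) :=
      Subgroup.subset_normalClosure ⟨z, hz, rfl⟩
    have hconj := Subgroup.Normal.conj_mem (Subgroup.normalClosure_normal) _ hzmem
      (s (trMk (tilde θ) (FreeMonoid.ofList wl)))⁻¹
    simpa [inv_inv, mul_assoc] using hconj
  · haveI := closure_rho_normal hanti hsymm hs (B := B)
    apply Subgroup.normalClosure_le_normal
    rintro g ⟨z, hz, rfl⟩
    exact Subgroup.subset_closure (gOf_mem_rho hanti hsymm hs hz)

end Assembly4

end PCM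

open PCM in
/-- `H_Z` is a free partially commutative group on `ρ_Z(B)` with the
commutations `θ̂_ρ = {(t,t') : tt' = t't, t ≠ t'}`. -/
theorem stmt_14 {A : Type*} (θ : A → A → Prop)
    (hanti : ∀ a, ¬ θ a a) (hsymm : ∀ a b, θ a b → θ b a) (B : Set A)
    (s : Trace (A ⊕ A) (tilde θ) →* PCGroup A θ) (hs : IsSection θ s) :
    ∃ e : PCGroup (rhoSet θ B s)
        (fun t t' => t ≠ t' ∧ (t : PCGroup A θ) * (t' : PCGroup A θ) =
          (t' : PCGroup A θ) * (t : PCGroup A θ)) →* PCGroup A θ,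
      (∀ t : rhoSet θ B s, e (gOf _ t) = (t : PCGroup A θ)) ∧
      Function.Injective e ∧
      e.range = Subgroup.normalClosure (gOf θ '' {a | a ∉ B}) := by
  refine ⟨eHom (θ := θ) (B := B) (s := s), fun t => eHom_of t, ?_, ?_⟩
  · intro x y hxy
    have e1 := DFunLike.congr_fun (hHom_eHom hanti hsymm hs) x
    have e2 := DFunLike.congr_fun (hHom_eHom hanti hsymm hs) y
    have h1 : SemidirectProduct.inl (φ := psiHom hanti hsymm hs) x =
        SemidirectProduct.inl y := by
      rw [← e1, ← e2]
      show hHom hanti hsymm hs (eHom x) = hHom hanti hsymm hs (eHom y)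
      rw [hxy]
    exact SemidirectProduct.inl_injective h1
  · have hrange : (eHom (θ := θ) (B := B) (s := s)).range =
        Subgroup.closure (rhoSet θ B s) := by
      rw [MonoidHom.range_eq_map, ← closure_range_pg (pcRels (relN θ B s)),
        MonoidHom.map_closure]
      congr 1
      ext g
      constructor
      · rintro ⟨_, ⟨t, rfl⟩, rfl⟩
        rw [eHom_of]
        exact t.2
      · intro hg
        exact ⟨PresentedGroup.of (⟨g, hg⟩ : rhoSet θ B s), ⟨⟨g, hg⟩, rfl⟩, eHom_of _⟩
    rw [hrange, closure_rho_eq hanti hsymm hs]
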